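/- arXiv:1711.00413 — 2 statements merged into one kernel-verified Lean document; each statement's English description precedes it below -/
import Mathlib

section
/- If two graph sequences 𝒢 and ℋ are coarsely equivalent and c(𝒢) = 1, then c(ℋ) = 1. In other words, having cost equal to 1 is an invariant of coarse equivalence of graph sequences. -/
open Filter Topology

/-- A graph sequence: finite connected graphs of uniformly bounded degree whose
number of vertices tends to infinity. -/
structure GraphSeq (V : ℕ → Type*) where
  G : ∀ n, SimpleGraph (V n)
  finite : ∀ n, Finite (V n)
  connected : ∀ n, (G n).Connected
  degBound : ℕ
  deg_le : ∀ n, ∀ x : V n, ((G n).neighborSet x).ncard ≤ degBound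
  card_tendsto : Tendsto (fun n => Nat.card (V n)) atTop atTop

/-- The edge number `e(𝒢) = liminf |E(G_n)|/|V(G_n)|`. -/
noncomputable def GraphSeq.edgeNumber {V : ℕ → Type*} (Gs : GraphSeq V) : ℝ :=
  liminf (fun n => (((Gs.G n).edgeSet.ncard : ℝ)) / (Nat.card (V n) : ℝ)) atTop

/-- Bi-Lipschitz equivalence `𝒢 ≃ ℋ` of graph sequences on the same vertex sets. -/
def GraphSeq.equivSeq {V : ℕ → Type*} (Gs Hs : GraphSeq V) : Prop :=
  ∃ L : ℕ, 0 < L ∧ ∀ n, ∀ x y : V n,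
    (Hs.G n).dist x y ≤ L * (Gs.G n).dist x y ∧
    (Gs.G n).dist x y ≤ L * (Hs.G n).dist x y

/-- The (combinatorial) cost `c(𝒢) = inf { e(ℋ) : ℋ ≃ 𝒢 }`. -/
noncomputable def GraphSeq.cost {V : ℕ → Type*} (Gs : GraphSeq V) : ℝ :=
  sInf { x : ℝ | ∃ Hs : GraphSeq V, Gs.equivSeq Hs ∧ x = Hs.edgeNumber }

/-- Coarse equivalence of graph sequences: a uniform `(A,A)`-quasi-isometry levelwise. -/
def coarseEquiv {V W : ℕ → Type*} (Gs : GraphSeq V) (Hs : GraphSeq W) : Prop :=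
  ∃ A : ℝ, 0 < A ∧ ∀ n, ∃ f : V n → W n,
    (∀ x y : V n,
      ((Gs.G n).dist x y : ℝ) / A - A ≤ ((Hs.G n).dist (f x) (f y) : ℝ) ∧
      ((Hs.G n).dist (f x) (f y) : ℝ) ≤ A * ((Gs.G n).dist x y : ℝ) + A) ∧
    (∀ w : W n, ∃ x : V n, ((Hs.G n).dist (f x) w : ℝ) ≤ A)

/-- Hyperfiniteness of a family of graphs. -/
def hyperfiniteFam {V : ℕ → Type*} (G : ∀ n, SimpleGraph (V n)) : Prop :=
  ∀ ε : ℝ, 0 < ε → ∃ K : ℕ, 0 < K ∧ ∃ E : ∀ n, Set (Sym2 (V n)),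
    (∀ n, E n ⊆ (G n).edgeSet) ∧
    limsup (fun n => (((E n).ncard : ℝ)) / (Nat.card (V n) : ℝ)) atTop < ε ∧
    ∀ n, ∀ x : V n, {y | ((G n).deleteEdges (E n)).Reachable x y}.ncard ≤ K

def GraphSeq.hyperfinite {V : ℕ → Type*} (Gs : GraphSeq V) : Prop :=
  hyperfiniteFam Gs.G

/-- Property A for a family of graphs. -/
def propertyAFam {V : ℕ → Type*} (G : ∀ n, SimpleGraph (V n)) : Prop :=
  ∀ ε : ℝ, 0 < ε → ∃ S : ℕ, 0 < S ∧ ∀ n, ∃ ξ : V n → V n → ℝ,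
    (∀ x, ∑ᶠ y, |ξ x y| = 1) ∧
    (∀ x y, ξ x y ≠ 0 → (G n).dist x y ≤ S) ∧
    (∀ x y, (G n).Adj x y → ∑ᶠ z, |ξ x z - ξ y z| < ε)

def GraphSeq.propertyA {V : ℕ → Type*} (Gs : GraphSeq V) : Prop :=
  propertyAFam Gs.G

/-- Property almost-A: one may delete a vanishing proportion of vertices to get property A. -/
def GraphSeq.almostA {V : ℕ → Type*} (Gs : GraphSeq V) : Prop :=
  ∃ V' : ∀ n, Set (V n),
    Tendsto (fun n => (((V' n).ncard : ℝ)) / (Nat.card (V n) : ℝ)) atTop (𝓝 0) ∧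
    propertyAFam (fun n => (Gs.G n).induce ((V' n)ᶜ))

/-- The set of edges of `G` with exactly one endpoint in `F`. -/
def edgeBoundary {V : Type*} (G : SimpleGraph V) (F : Set V) : Set (Sym2 V) :=
  {e | e ∈ G.edgeSet ∧ ∃ x y, e = s(x, y) ∧ x ∈ F ∧ y ∉ F}

/-- The Cayley graph of a group with respect to a set `S`. -/
def cayleyGraph (Γ : Type*) [Group Γ] (S : Set Γ) : SimpleGraph Γ :=
  SimpleGraph.fromRel (fun x y => ∃ s ∈ S, y = x * s)

/-- The simple graph underlying an `S`-labelled graph given by label maps `lab`. -/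
def labGraph {Γ V : Type*} (S : Set Γ) (lab : Γ → V → V) : SimpleGraph V :=
  SimpleGraph.fromRel (fun x y => ∃ s ∈ S, y = lab s x)

/-- Right multiplication by `s` on the right cosets of `H`. -/
def schreierMul {Γ : Type*} [Group Γ] (H : Subgroup Γ) (s : Γ) :
    Quotient (QuotientGroup.rightRel H) → Quotient (QuotientGroup.rightRel H) :=
  Quotient.map (fun g => g * s) (fun a b hab => by
    have h := (QuotientGroup.rightRel_apply).mp hab
    exact (QuotientGroup.rightRel_apply).mpr (by
      simpa [mul_assoc] using h))

/-- The Schreier graph `Sch(Γ, H, S)` on the right cosets of `H`. -/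
def schreierGraph {Γ : Type*} [Group Γ] (H : Subgroup Γ) (S : Set Γ) :
    SimpleGraph (Quotient (QuotientGroup.rightRel H)) :=
  labGraph S (fun s => schreierMul H s)

/-- The rooted labelled `r`-ball of the labelled graph `lab` at `x` is isomorphic to
the `r`-ball around the identity in `Cay(Γ, S)`. -/
def ballIso {Γ : Type*} [Group Γ] (S : Set Γ) {V : Type*} (lab : Γ → V → V)
    (x : V) (r : ℕ) : Prop :=
  ∃ f : Γ → V, f 1 = x ∧
    (∀ g g' : Γ, (cayleyGraph Γ S).dist 1 g ≤ r → (cayleyGraph Γ S).dist 1 g' ≤ r →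
      f g = f g' → g = g') ∧
    (∀ g : Γ, (cayleyGraph Γ S).dist 1 g < r → ∀ s ∈ S, f (g * s) = lab s (f g)) ∧
    (∀ v : V, (labGraph S lab).dist x v ≤ r →
      ∃ g : Γ, (cayleyGraph Γ S).dist 1 g ≤ r ∧ f g = v)

/-- Benjamini–Schramm convergence of the `S`-labelled graphs given by `lab` to `Cay(Γ, S)`. -/
def BSConv {Γ : Type*} [Group Γ] (S : Set Γ) {V : ℕ → Type*}
    (lab : ∀ n, Γ → V n → V n) : Prop :=
  ∀ r : ℕ, Tendsto
    (fun n => ((Nat.card {x : V n // ballIso S (lab n) x r} : ℝ)) / (Nat.card (V n) : ℝ))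
    atTop (𝓝 1)

/-- A sofic approximation of `Γ`: a graph sequence labelled by `S` which
Benjamini–Schramm converges to `Cay(Γ, S)`. -/
def IsSoficApprox {Γ : Type*} [Group Γ] (S : Set Γ) {V : ℕ → Type*} (Gs : GraphSeq V)
    (lab : ∀ n, Γ → V n → V n) : Prop :=
  (∀ n, Gs.G n = labGraph S (lab n)) ∧ BSConv S lab

/-- Amenability via Følner sets with respect to the generating set `S`. -/
def FolnerAmenable {Γ : Type*} [Group Γ] (S : Set Γ) : Prop :=
  ∀ ε : ℝ, 0 < ε → ∃ F : Set Γ, F.Finite ∧ F.Nonempty ∧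
    ∀ g ∈ S, ((symmDiff ((fun x => g * x) '' F) F).ncard : ℝ) < ε * (F.ncard : ℝ)


/-!
Take `𝒢' ≃ 𝒢` with `e(𝒢') < 1 + δ` and push each `G'_n` forward to `W_n` along a coarse inverse
`g` of the quasi-isometry. Retract every vertex of `G'_n` onto the net `N = g(W_n)` by repeatedly
stepping to a neighbour closer to `N`; the steps taken from the vertices outside `N` are
`|V_n| - |N|` distinct edges collapsed by the retraction. The new graph joins every `w` to the
representative of `g w` (at most `|W_n| - |N|` edges) and the images of the edges of `G'_n`, so it
has at most `|W_n| + |E(G'_n)| - |V_n|` edges. It is bi-Lipschitz to `H_n` with a constant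
depending only on the coarse constants, and `|V_n| ≤ M |W_n|` by bounded degree, so its edge
ratio is at most `1 + M δ`. Conversely every edge number is `≥ 1`, since a connected graph has at
least `|V| - 1` edges.
-/

open SimpleGraph Function

lemma Set.ncard_biUnion_le_ncard_mul {ι α : Type*} {t : Set ι} (ht : t.Finite) (s : ι → Set α)
    {m : ℕ} (h : ∀ i ∈ t, (s i).ncard ≤ m) : (⋃ i ∈ t, s i).ncard ≤ t.ncard * m := by
  calc (⋃ i ∈ t, s i).ncard ≤ ∑ i ∈ ht.toFinset, (s i).ncard := by
        simpa using ht.toFinset.set_ncard_biUnion_le s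
    _ ≤ ∑ _i ∈ ht.toFinset, m := Finset.sum_le_sum fun i hi => h i (by simpa using hi)
    _ = t.ncard * m := by simp [Set.ncard_eq_toFinset_card t ht]

namespace SimpleGraph

variable {V W : Type*} {G : SimpleGraph V}

lemma exists_adj_dist_lt_of_dist_ne_zero {x y : V} (h : G.dist x y ≠ 0) :
    ∃ z, G.Adj x z ∧ G.dist z y < G.dist x y := by
  obtain ⟨p, hp⟩ := exists_walk_of_dist_ne_zero h
  cases p with
  | nil => exact absurd dist_self h
  | cons hadj q => exact ⟨_, hadj, (dist_le q).trans_lt (by simp at hp; omega)⟩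

lemma dist_le_mul_dist_of_forall_adj {H : SimpleGraph V} (hG : G.Connected) (hH : H.Connected)
    {B : ℕ} (hB : ∀ a b, H.Adj a b → G.dist a b ≤ B) (u v : V) :
    G.dist u v ≤ B * H.dist u v := by
  obtain ⟨p, hp⟩ := hH.exists_walk_length_eq_dist u v
  rw [← hp]
  clear hp
  induction p with
  | nil => simp
  | @cons u v w h q ih =>
    rw [Walk.length_cons, mul_add_one]
    have := hB _ _ h
    exact (hG.dist_triangle (v := v)).trans (by omega)

lemma ncard_setOf_dist_le_le_pow [Finite V] (hG : G.Connected) {d : ℕ}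
    (hd : ∀ v, (G.neighborSet v).ncard ≤ d) (x : V) (k : ℕ) :
    {y | G.dist x y ≤ k}.ncard ≤ (d + 1) ^ k := by
  induction k with
  | zero =>
    have : {y | G.dist x y ≤ 0} = {x} := by ext y; simp [hG.dist_eq_zero_iff, eq_comm]
    simp only [this, Set.ncard_singleton, pow_zero, le_refl]
  | succ k ih =>
    have hsub : {y | G.dist x y ≤ k + 1} ⊆
        ⋃ z ∈ {y | G.dist x y ≤ k}, insert z (G.neighborSet z) := by
      intro y hy
      by_cases h0 : G.dist y x = 0
      · obtain rfl := hG.dist_eq_zero_iff.mp h0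
        exact Set.mem_biUnion (by simp) (Set.mem_insert _ _)
      · obtain ⟨z, hyz, hz⟩ := exists_adj_dist_lt_of_dist_ne_zero h0
        refine Set.mem_biUnion (x := z) ?_ (Set.mem_insert_of_mem _ hyz.symm)
        simp only [Set.mem_ofPred_eq] at hy ⊢
        rw [dist_comm] at hy ⊢
        omega
    calc _ ≤ _ := Set.ncard_le_ncard hsub (Set.toFinite _)
      _ ≤ {y | G.dist x y ≤ k}.ncard * (d + 1) :=
        Set.ncard_biUnion_le_ncard_mul (Set.toFinite _) _ fun z _ =>
          (Set.ncard_insert_le _ _).trans (by have := hd z; omega)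
      _ ≤ (d + 1) ^ (k + 1) := by rw [pow_succ]; exact Nat.mul_le_mul_right _ ih

lemma ncard_edgeSet_le_mul_card [Finite V] {d : ℕ} (hd : ∀ v, (G.neighborSet v).ncard ≤ d) :
    G.edgeSet.ncard ≤ Nat.card V * d := by
  have hsub : G.edgeSet ⊆ ⋃ v ∈ (Set.univ : Set V), (fun w => s(v, w)) '' G.neighborSet v := by
    intro e he
    induction e with
    | _ v w => exact Set.mem_biUnion (Set.mem_univ v) ⟨w, he, rfl⟩
  calc _ ≤ _ := Set.ncard_le_ncard hsub (Set.toFinite _)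
    _ ≤ (Set.univ : Set V).ncard * d :=
      Set.ncard_biUnion_le_ncard_mul (Set.toFinite _) _ fun v _ =>
        (Set.ncard_image_le (Set.toFinite _)).trans (hd v)
    _ = Nat.card V * d := by rw [Set.ncard_univ]

noncomputable section Retraction

variable (G) (N : Set V)

def infDist (x : V) : ℕ := sInf (G.dist x '' N)

open Classical in
def stepToward (x : V) : V :=
  if h : ∃ y, G.Adj x y ∧ G.infDist N y < G.infDist N x then h.choose else x

/-- The recursion stops once `stepToward` no longer gets closer to `N`; for connected `G` and
nonempty `N` this happens exactly on `N`. -/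
def retraction (x : V) : V :=
  if G.infDist N (G.stepToward N x) < G.infDist N x then
    retraction (G.stepToward N x)
  else x
termination_by G.infDist N x
decreasing_by assumption

variable {G N}

lemma infDist_le {x n : V} (hn : n ∈ N) : G.infDist N x ≤ G.dist x n :=
  Nat.sInf_le ⟨n, hn, rfl⟩

lemma exists_mem_dist_eq_infDist (hN : N.Nonempty) (x : V) :
    ∃ n ∈ N, G.dist x n = G.infDist N x :=
  Nat.sInf_mem (hN.image _)

lemma infDist_eq_zero_iff (hG : G.Connected) (hN : N.Nonempty) {x : V} :
    G.infDist N x = 0 ↔ x ∈ N := by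
  refine ⟨fun h => ?_, fun h => by simpa using infDist_le (G := G) (x := x) h⟩
  obtain ⟨n, hn, hxn⟩ := exists_mem_dist_eq_infDist hN x
  rwa [hG.dist_eq_zero_iff.mp (hxn.trans h)]

lemma infDist_stepToward_lt (hG : G.Connected) (hN : N.Nonempty) {x : V} (hx : x ∉ N) :
    G.infDist N (G.stepToward N x) < G.infDist N x := by
  obtain ⟨n, hn, hxn⟩ := exists_mem_dist_eq_infDist hN x
  have hxn0 : G.dist x n ≠ 0 := by rwa [hxn, ne_eq, infDist_eq_zero_iff hG hN]
  obtain ⟨y, hxy, hy⟩ := exists_adj_dist_lt_of_dist_ne_zero hxn0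
  have hex : ∃ y, G.Adj x y ∧ G.infDist N y < G.infDist N x :=
    ⟨y, hxy, (infDist_le hn).trans_lt (hxn ▸ hy)⟩
  rw [stepToward, dif_pos hex]
  exact hex.choose_spec.2

lemma adj_stepToward {x : V} (h : G.infDist N (G.stepToward N x) < G.infDist N x) :
    G.Adj x (G.stepToward N x) := by
  unfold stepToward at h ⊢
  split_ifs at h ⊢ with hex
  · exact hex.choose_spec.1
  · exact absurd h (lt_irrefl _)

lemma retraction_of_mem {x : V} (hx : x ∈ N) : G.retraction N x = x := by
  have : G.infDist N x = 0 := by simpa using infDist_le (G := G) (x := x) hx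
  rw [retraction, if_neg (by omega)]

lemma retraction_stepToward (hG : G.Connected) (hN : N.Nonempty) {x : V} (hx : x ∉ N) :
    G.retraction N (G.stepToward N x) = G.retraction N x := by
  conv_rhs => rw [retraction, if_pos (infDist_stepToward_lt hG hN hx)]

lemma retraction_mem (hG : G.Connected) (hN : N.Nonempty) (x : V) : G.retraction N x ∈ N := by
  induction x using retraction.induct G N with
  | case1 x h ih => rwa [retraction, if_pos h]
  | case2 x h =>
    rw [retraction, if_neg h]
    by_contra hx
    exact h (infDist_stepToward_lt hG hN hx)

lemma dist_retraction_le (hG : G.Connected) (x : V) :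
    G.dist x (G.retraction N x) ≤ G.infDist N x := by
  induction x using retraction.induct G N with
  | case1 x h ih =>
    rw [retraction, if_pos h]
    have h1 : G.dist x (G.stepToward N x) = 1 := dist_eq_one_iff_adj.mpr (adj_stepToward h)
    have := hG.dist_triangle (u := x) (v := G.stepToward N x)
      (w := G.retraction N (G.stepToward N x))
    omega
  | case2 x h => rw [retraction, if_neg h, dist_self]; exact Nat.zero_le _

lemma ncard_edgeSet_not_collapsed_add_ncard_compl_le [Finite V] (hG : G.Connected)
    (hN : N.Nonempty) :
    {e ∈ G.edgeSet | ¬ (e.map (G.retraction N)).IsDiag}.ncard + Nᶜ.ncard ≤ G.edgeSet.ncard := by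
  set collapsed := (fun x => s(x, G.stepToward N x)) '' Nᶜ
  have hinj : Set.InjOn (fun x => s(x, G.stepToward N x)) Nᶜ := by
    intro x hx x' hx' he
    rcases Sym2.eq_iff.mp he with ⟨h, -⟩ | ⟨h, h'⟩
    · exact h
    · have hlt := infDist_stepToward_lt hG hN hx
      have hlt' := infDist_stepToward_lt hG hN hx'
      rw [h'] at hlt
      rw [← h] at hlt'
      omega
  have hsub : collapsed ⊆ G.edgeSet := by
    rintro _ ⟨x, hx, rfl⟩
    exact adj_stepToward (infDist_stepToward_lt hG hN hx)
  have hdisj : Disjoint {e ∈ G.edgeSet | ¬ (e.map (G.retraction N)).IsDiag} collapsed := by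
    rw [Set.disjoint_right]
    rintro _ ⟨x, hx, rfl⟩ ⟨-, hnd⟩
    exact hnd (by simp [retraction_stepToward hG hN hx])
  rw [← hinj.ncard_image, ← Set.ncard_union_eq hdisj]
  exact Set.ncard_le_ncard (Set.union_subset (Set.sep_subset _ _) hsub)

end Retraction

noncomputable section Transfer

variable [Nonempty W] (G) (g : W → V)

def transferMap (x : V) : W := invFun g (G.retraction (Set.range g) x)

def transferLinks : Set (Sym2 W) := Set.range fun w => s(w, G.transferMap g (g w))

def transfer : SimpleGraph W :=
  fromEdgeSet (G.transferLinks g ∪ Sym2.map (G.transferMap g) '' G.edgeSet)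

variable {G g}

lemma transferMap_apply (w : W) : G.transferMap g (g w) = invFun g (g w) := by
  rw [transferMap, retraction_of_mem (Set.mem_range_self w)]

lemma apply_transferMap (hG : G.Connected) (x : V) :
    g (G.transferMap g x) = G.retraction (Set.range g) x :=
  invFun_eq (retraction_mem hG (Set.range_nonempty g) x)

lemma eq_or_transfer_adj (w : W) :
    w = G.transferMap g (g w) ∨ (G.transfer g).Adj w (G.transferMap g (g w)) := by
  rw [or_iff_not_imp_left]
  exact fun hne => (fromEdgeSet_adj _).mpr ⟨Or.inl ⟨w, rfl⟩, hne⟩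

lemma exists_transfer_walk {x y : V} (p : G.Walk x y) :
    ∃ q : (G.transfer g).Walk (G.transferMap g x) (G.transferMap g y), q.length ≤ p.length := by
  induction p with
  | nil => exact ⟨Walk.nil, le_rfl⟩
  | @cons x z y h p ih =>
    obtain ⟨q, hq⟩ := ih
    by_cases he : G.transferMap g x = G.transferMap g z
    · exact ⟨q.copy he.symm rfl, by simp; omega⟩
    · have hadj : (G.transfer g).Adj (G.transferMap g x) (G.transferMap g z) :=
        (fromEdgeSet_adj _).mpr ⟨Or.inr ⟨s(x, z), h, rfl⟩, he⟩
      exact ⟨Walk.cons hadj q, by simp [hq]⟩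

lemma transfer_connected (hG : G.Connected) : (G.transfer g).Connected := by
  have hrep (w : W) : (G.transfer g).Reachable w (G.transferMap g (g w)) := by
    rcases eq_or_transfer_adj (G := G) w with h | h
    · rw [← h]
    · exact h.reachable
  refine (connected_iff _).mpr ⟨fun w w' => ?_, inferInstance⟩
  obtain ⟨q, -⟩ := exists_transfer_walk (g := g) (hG.preconnected (g w) (g w')).some
  exact ((hrep w).trans q.reachable).trans (hrep w').symm

lemma transfer_dist_transferMap_le (hG : G.Connected) (x y : V) :
    (G.transfer g).dist (G.transferMap g x) (G.transferMap g y) ≤ G.dist x y := by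
  obtain ⟨p, hp⟩ := hG.exists_walk_length_eq_dist x y
  obtain ⟨q, hq⟩ := exists_transfer_walk (g := g) p
  exact (dist_le q).trans (hp ▸ hq)

lemma transfer_dist_transferMap_self_le (w : W) :
    (G.transfer g).dist w (G.transferMap g (g w)) ≤ 1 := by
  rcases eq_or_transfer_adj (G := G) w with h | h
  · rw [← h, dist_self]; exact zero_le_one
  · rw [dist_eq_one_iff_adj.mpr h]

lemma ncard_transferLinks_sdiff_add_ncard_range_le [Finite W] :
    (G.transferLinks g \ Sym2.diagSet).ncard + (Set.range g).ncard ≤ Nat.card W := by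
  have hinj : Set.InjOn (invFun g) (Set.range g) := fun v hv v' hv' he => by
    rw [← invFun_eq hv, ← invFun_eq hv', he]
  have hfix : ∀ w ∈ invFun g '' Set.range g, w = G.transferMap g (g w) := by
    rintro _ ⟨v, hv, rfl⟩
    rw [transferMap_apply, invFun_eq hv]
  have hsub : G.transferLinks g \ Sym2.diagSet ⊆
      (fun w => s(w, G.transferMap g (g w))) '' (invFun g '' Set.range g)ᶜ := by
    rintro _ ⟨⟨w, rfl⟩, hw⟩
    exact ⟨w, fun hwN => hw (by simp [← hfix w hwN]), rfl⟩
  have := Set.ncard_add_ncard_compl (invFun g '' Set.range g)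
  rw [hinj.ncard_image] at this
  have := (Set.ncard_le_ncard hsub (Set.toFinite _)).trans (Set.ncard_image_le (Set.toFinite _))
  omega

lemma ncard_image_edgeSet_sdiff_add_card_le [Finite V] (hG : G.Connected) :
    (Sym2.map (G.transferMap g) '' G.edgeSet \ Sym2.diagSet).ncard + Nat.card V
      ≤ G.edgeSet.ncard + (Set.range g).ncard := by
  have hsub : Sym2.map (G.transferMap g) '' G.edgeSet \ Sym2.diagSet ⊆
      Sym2.map (G.transferMap g) ''
        {e ∈ G.edgeSet | ¬ (e.map (G.retraction (Set.range g))).IsDiag} := by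
    rintro _ ⟨⟨e, he, rfl⟩, hdiag⟩
    refine ⟨e, ⟨he, fun hc => hdiag ?_⟩, rfl⟩
    induction e with
    | _ x y =>
      simp only [Sym2.map_mk, Sym2.mk_isDiag_iff, Sym2.mem_diagSet] at hc hdiag ⊢
      exact congrArg (invFun g) hc
  have := Set.ncard_add_ncard_compl (Set.range g)
  have := ncard_edgeSet_not_collapsed_add_ncard_compl_le hG (Set.range_nonempty g)
  have := (Set.ncard_le_ncard hsub (Set.toFinite _)).trans (Set.ncard_image_le (Set.toFinite _))
  omega

lemma ncard_edgeSet_transfer_add_card_le [Finite V] [Finite W] (hG : G.Connected) :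
    (G.transfer g).edgeSet.ncard + Nat.card V ≤ Nat.card W + G.edgeSet.ncard := by
  have hunion := Set.ncard_union_le (G.transferLinks g \ Sym2.diagSet)
    (Sym2.map (G.transferMap g) '' G.edgeSet \ Sym2.diagSet)
  rw [← Set.union_sdiff_distrib, ← edgeSet_fromEdgeSet] at hunion
  have := ncard_transferLinks_sdiff_add_ncard_range_le (G := G) (g := g)
  have := ncard_image_edgeSet_sdiff_add_card_le (g := g) hG
  change (G.transfer g).edgeSet.ncard ≤ _ at hunion
  omega

end Transfer

/-- `g` witnesses the coarse surjectivity of `f`. -/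
structure IsQuasiIsometryWith (G : SimpleGraph V) (H : SimpleGraph W) (K : ℕ) (f : V → W)
    (g : W → V) : Prop where
  dist_le : ∀ x y, G.dist x y ≤ K * H.dist (f x) (f y) + K
  dist_map_le : ∀ x y, H.dist (f x) (f y) ≤ K * G.dist x y + K
  dist_map_inv_le : ∀ w, H.dist (f (g w)) w ≤ K

namespace IsQuasiIsometryWith

variable {G G' : SimpleGraph V} {H : SimpleGraph W} {K : ℕ} {f : V → W} {g : W → V}

lemma of_dist_le_mul {L : ℕ} (hL : 0 < L) (hG'G : ∀ x y, G'.dist x y ≤ L * G.dist x y)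
    (hGG' : ∀ x y, G.dist x y ≤ L * G'.dist x y) (h : G.IsQuasiIsometryWith H K f g) :
    G'.IsQuasiIsometryWith H (L * K) f g where
  dist_le x y := (hG'G x y).trans <| (Nat.mul_le_mul_left L (h.dist_le x y)).trans_eq (by ring)
  dist_map_le x y := (h.dist_map_le x y).trans <|
    calc K * G.dist x y + K ≤ K * (L * G'.dist x y) + L * K :=
          add_le_add (Nat.mul_le_mul_left K (hGG' x y)) (Nat.le_mul_of_pos_left K hL)
      _ = L * K * G'.dist x y + L * K := by ring
  dist_map_inv_le w := (h.dist_map_inv_le w).trans (Nat.le_mul_of_pos_left K hL)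

lemma card_le [Finite V] [Finite W] (h : G.IsQuasiIsometryWith H K f g) (hG : G.Connected)
    {d : ℕ} (hd : ∀ v, (G.neighborSet v).ncard ≤ d) : Nat.card V ≤ (d + 1) ^ K * Nat.card W := by
  have hfiber : ∀ w ∈ Set.range f, (f ⁻¹' {w}).ncard ≤ (d + 1) ^ K := by
    rintro _ ⟨x, rfl⟩
    refine le_trans (Set.ncard_le_ncard (fun y (hy : f y = f x) => ?_) (Set.toFinite _))
      (ncard_setOf_dist_le_le_pow hG hd x K)
    simpa [hy] using h.dist_le x y
  calc Nat.card V = (⋃ w ∈ Set.range f, f ⁻¹' {w}).ncard := by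
        rw [Set.biUnion_preimage_singleton, Set.preimage_range, Set.ncard_univ]
    _ ≤ (Set.range f).ncard * (d + 1) ^ K :=
        Set.ncard_biUnion_le_ncard_mul (Set.toFinite _) _ hfiber
    _ ≤ (d + 1) ^ K * Nat.card W := by
        rw [mul_comm, ← Set.ncard_univ W]
        exact Nat.mul_le_mul_left _ (Set.ncard_le_ncard (Set.subset_univ _))

lemma infDist_range_le (h : G.IsQuasiIsometryWith H K f g) (x : V) :
    G.infDist (Set.range g) x ≤ K * K + K := by
  have h1 := h.dist_le x (g (f x))
  have h2 := Nat.mul_le_mul_left K (h.dist_map_inv_le (f x))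
  rw [dist_comm] at h2
  exact (infDist_le (Set.mem_range_self (f x))).trans (by omega)

variable [Nonempty W]

lemma dist_map_retraction_le (h : G.IsQuasiIsometryWith H K f g) (hG : G.Connected) (x : V) :
    H.dist (f (G.retraction (Set.range g) x)) (G.transferMap g x) ≤ K := by
  rw [← apply_transferMap hG]
  exact h.dist_map_inv_le _

lemma dist_transferMap_apply_le (h : G.IsQuasiIsometryWith H K f g) (hG : G.Connected)
    (hH : H.Connected) (w : W) : H.dist w (G.transferMap g (g w)) ≤ 2 * K := by
  have h1 := h.dist_map_inv_le w
  have h2 := h.dist_map_retraction_le hG (g w)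
  rw [retraction_of_mem (Set.mem_range_self w)] at h2
  rw [dist_comm] at h1
  have := hH.dist_triangle (u := w) (v := f (g w)) (w := G.transferMap g (g w))
  omega

lemma dist_transferMap_le_of_adj (h : G.IsQuasiIsometryWith H K f g) (hG : G.Connected)
    (hH : H.Connected) {x y : V} (hxy : G.Adj x y) :
    H.dist (G.transferMap g x) (G.transferMap g y) ≤ 4 * (K + 1) ^ 3 := by
  set N := Set.range g
  have hrx := (h.infDist_range_le x).trans' (dist_retraction_le (N := N) hG x)
  have hry := (h.infDist_range_le y).trans' (dist_retraction_le (N := N) hG y)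
  have hretr : G.dist (G.retraction N x) (G.retraction N y) ≤ 2 * (K * K + K) + 1 := by
    rw [dist_comm] at hrx
    have := hG.dist_triangle (u := G.retraction N x) (v := x) (w := y)
    have := hG.dist_triangle (u := G.retraction N x) (v := y) (w := G.retraction N y)
    have := dist_eq_one_iff_adj.mpr hxy
    omega
  have hf := (h.dist_map_le _ _).trans (Nat.add_le_add_right (Nat.mul_le_mul_left K hretr) K)
  have hx := h.dist_map_retraction_le hG x
  have hy := h.dist_map_retraction_le hG y
  rw [dist_comm] at hx
  have := hH.dist_triangle (u := G.transferMap g x) (v := f (G.retraction N x))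
    (w := G.transferMap g y)
  have := hH.dist_triangle (u := f (G.retraction N x)) (v := f (G.retraction N y))
    (w := G.transferMap g y)
  have hpoly : 2 * K * K * K + 2 * K * K + 4 * K ≤ 4 * (K + 1) ^ 3 := by ring_nf; omega
  nlinarith

lemma dist_le_of_transfer_adj (h : G.IsQuasiIsometryWith H K f g) (hG : G.Connected)
    (hH : H.Connected) {a b : W} (hab : (G.transfer g).Adj a b) :
    H.dist a b ≤ 4 * (K + 1) ^ 3 := by
  have hK : 2 * K ≤ 4 * (K + 1) ^ 3 := by ring_nf; omega
  rcases (fromEdgeSet_adj _).mp hab with ⟨⟨w, hw⟩ | ⟨e, he, hemap⟩, -⟩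
  · rcases Sym2.eq_iff.mp hw with ⟨rfl, rfl⟩ | ⟨rfl, rfl⟩
    · exact (h.dist_transferMap_apply_le hG hH _).trans hK
    · rw [dist_comm]
      exact (h.dist_transferMap_apply_le hG hH _).trans hK
  · induction e with
    | _ x y =>
      rcases Sym2.eq_iff.mp hemap with ⟨rfl, rfl⟩ | ⟨rfl, rfl⟩
      · exact h.dist_transferMap_le_of_adj hG hH he
      · exact h.dist_transferMap_le_of_adj hG hH he.symm

lemma dist_le_mul_transfer_dist (h : G.IsQuasiIsometryWith H K f g) (hG : G.Connected)
    (hH : H.Connected) (a b : W) :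
    H.dist a b ≤ 4 * (K + 1) ^ 3 * (G.transfer g).dist a b :=
  dist_le_mul_dist_of_forall_adj hH (transfer_connected hG)
    (fun _ _ => h.dist_le_of_transfer_adj hG hH) a b

lemma transfer_dist_le_mul_dist (h : G.IsQuasiIsometryWith H K f g) (hG : G.Connected)
    (hH : H.Connected) (a b : W) :
    (G.transfer g).dist a b ≤ 4 * (K + 1) ^ 3 * H.dist a b := by
  rcases Nat.eq_zero_or_pos (H.dist a b) with hab | hab
  · rw [hH.dist_eq_zero_iff.mp hab, dist_self]; exact Nat.zero_le _
  have hT := transfer_connected (g := g) hG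
  have hga : H.dist (f (g a)) (f (g b)) ≤ H.dist a b + 2 * K := by
    have h1 := h.dist_map_inv_le a
    have h2 := h.dist_map_inv_le b
    rw [dist_comm] at h2
    have := hH.dist_triangle (u := f (g a)) (v := a) (w := f (g b))
    have := hH.dist_triangle (u := a) (v := b) (w := f (g b))
    omega
  have hg := (h.dist_le (g a) (g b)).trans (Nat.add_le_add_right (Nat.mul_le_mul_left K hga) K)
  have hmid := transfer_dist_transferMap_le (g := g) hG (g a) (g b)
  have ha := transfer_dist_transferMap_self_le (G := G) (g := g) a
  have hb := transfer_dist_transferMap_self_le (G := G) (g := g) b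
  rw [dist_comm] at hb
  have := hT.dist_triangle (u := a) (v := G.transferMap g (g a)) (w := b)
  have := hT.dist_triangle (u := G.transferMap g (g a)) (v := G.transferMap g (g b)) (w := b)
  rw [mul_add] at hg
  have hpoly : K * H.dist a b + (K * (2 * K) + K + 2) ≤ 4 * (K + 1) ^ 3 * H.dist a b :=
    calc K * H.dist a b + (K * (2 * K) + K + 2)
        ≤ K * H.dist a b + (K * (2 * K) + K + 2) * H.dist a b :=
          Nat.add_le_add_left (Nat.le_mul_of_pos_right _ hab) _
      _ = (2 * K * K + 2 * K + 2) * H.dist a b := by ring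
      _ ≤ 4 * (K + 1) ^ 3 * H.dist a b := Nat.mul_le_mul_right _ (by ring_nf; omega)
  omega

lemma ncard_neighborSet_transfer_le [Finite W] (h : G.IsQuasiIsometryWith H K f g)
    (hG : G.Connected) (hH : H.Connected) {d : ℕ} (hd : ∀ w, (H.neighborSet w).ncard ≤ d)
    (w : W) : ((G.transfer g).neighborSet w).ncard ≤ (d + 1) ^ (4 * (K + 1) ^ 3) :=
  (Set.ncard_le_ncard (fun _ hw' => h.dist_le_of_transfer_adj hG hH hw') (Set.toFinite _)).trans
    (ncard_setOf_dist_le_le_pow hH hd w _)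

end IsQuasiIsometryWith

end SimpleGraph

lemma coarseEquiv.exists_isQuasiIsometryWith {V W : ℕ → Type*} {Gs : GraphSeq V}
    {Hs : GraphSeq W} (h : coarseEquiv Gs Hs) :
    ∃ K : ℕ, ∀ n, ∃ f g, (Gs.G n).IsQuasiIsometryWith (Hs.G n) K f g := by
  obtain ⟨A, hA, hf⟩ := h
  set a := ⌈A⌉₊
  have haA : A ≤ a := Nat.le_ceil A
  refine ⟨a * a + a, fun n => ?_⟩
  obtain ⟨f, hfd, hsurj⟩ := hf n
  choose g hg using hsurj
  refine ⟨f, g, ⟨fun x y => ?_, fun x y => ?_, fun w => ?_⟩⟩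
  · have hlow := (div_le_iff₀ hA).mp (sub_le_iff_le_add.mp (hfd x y).1)
    have hd : (0 : ℝ) ≤ (Hs.G n).dist (f x) (f y) := Nat.cast_nonneg _
    have : ((Gs.G n).dist x y : ℝ) ≤
        ((a * a + a) * (Hs.G n).dist (f x) (f y) + (a * a + a) : ℕ) := by
      push_cast
      nlinarith
    exact_mod_cast this
  · have hd : (0 : ℝ) ≤ (Gs.G n).dist x y := Nat.cast_nonneg _
    have : ((Hs.G n).dist (f x) (f y) : ℝ) ≤
        ((a * a + a) * (Gs.G n).dist x y + (a * a + a) : ℕ) := by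
      push_cast
      nlinarith [(hfd x y).2]
    exact_mod_cast this
  · have : ((Hs.G n).dist (f (g w)) w : ℝ) ≤ (a * a + a : ℕ) := by
      push_cast
      nlinarith [hg w]
    exact_mod_cast this

namespace GraphSeq

variable {V W : ℕ → Type*}

noncomputable def edgeRatio (Gs : GraphSeq V) (n : ℕ) : ℝ :=
  ((Gs.G n).edgeSet.ncard : ℝ) / Nat.card (V n)

lemma card_pos (Gs : GraphSeq V) (n : ℕ) : 0 < Nat.card (V n) :=
  have := Gs.finite n
  have := (Gs.connected n).nonempty
  Nat.card_pos

lemma edgeRatio_nonneg (Gs : GraphSeq V) (n : ℕ) : 0 ≤ Gs.edgeRatio n := by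
  unfold edgeRatio
  positivity

lemma edgeRatio_le_degBound (Gs : GraphSeq V) (n : ℕ) : Gs.edgeRatio n ≤ Gs.degBound := by
  have := Gs.finite n
  rw [edgeRatio, div_le_iff₀ (by exact_mod_cast Gs.card_pos n), mul_comm]
  exact_mod_cast ncard_edgeSet_le_mul_card (Gs.deg_le n)

lemma isBoundedUnder_le_edgeRatio (Gs : GraphSeq V) :
    IsBoundedUnder (· ≤ ·) atTop Gs.edgeRatio :=
  isBoundedUnder_of ⟨_, Gs.edgeRatio_le_degBound⟩

lemma isBoundedUnder_ge_edgeRatio (Gs : GraphSeq V) :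
    IsBoundedUnder (· ≥ ·) atTop Gs.edgeRatio :=
  isBoundedUnder_of ⟨0, Gs.edgeRatio_nonneg⟩

lemma one_le_edgeNumber (Gs : GraphSeq V) : 1 ≤ Gs.edgeNumber := by
  have htend : Tendsto (fun n => 1 - (Nat.card (V n) : ℝ)⁻¹) atTop (𝓝 1) := by
    simpa using (tendsto_const_nhds (x := (1 : ℝ))).sub
      (tendsto_natCast_atTop_atTop.comp Gs.card_tendsto).inv_tendsto_atTop
  have hle (n : ℕ) : 1 - (Nat.card (V n) : ℝ)⁻¹ ≤ Gs.edgeRatio n := by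
    have := Gs.finite n
    have hcard : (Nat.card (V n) : ℝ) ≤ (Gs.G n).edgeSet.ncard + 1 := by
      exact_mod_cast (Gs.connected n).card_vert_le_card_edgeSet_add_one
    have hpos : (0 : ℝ) < Nat.card (V n) := by exact_mod_cast Gs.card_pos n
    rw [edgeRatio, le_div_iff₀ hpos, sub_mul, inv_mul_cancel₀ hpos.ne']
    linarith
  rw [← htend.liminf_eq]
  exact liminf_le_liminf (Eventually.of_forall hle) htend.isBoundedUnder_ge
    Gs.isBoundedUnder_le_edgeRatio.isCoboundedUnder_ge

lemma equivSeq_refl (Gs : GraphSeq V) : Gs.equivSeq Gs :=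
  ⟨1, one_pos, by simp⟩

lemma one_le_cost (Gs : GraphSeq V) : 1 ≤ Gs.cost := by
  unfold cost
  exact le_csInf ⟨_, Gs, Gs.equivSeq_refl, rfl⟩ fun _ ⟨Hs, _, h⟩ => h ▸ Hs.one_le_edgeNumber

lemma cost_le_edgeNumber {Gs Hs : GraphSeq V} (h : Gs.equivSeq Hs) : Gs.cost ≤ Hs.edgeNumber := by
  unfold cost
  exact csInf_le ⟨1, fun _ ⟨Hs, _, h⟩ => h ▸ Hs.one_le_edgeNumber⟩ ⟨Hs, h, rfl⟩

lemma exists_equivSeq_edgeNumber_lt {Gs : GraphSeq V} {b : ℝ} (h : Gs.cost < b) :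
    ∃ Hs, Gs.equivSeq Hs ∧ Hs.edgeNumber < b := by
  obtain ⟨_, ⟨Hs, hHs, rfl⟩, hlt⟩ :=
    exists_lt_of_csInf_lt (by exact ⟨_, Gs, Gs.equivSeq_refl, rfl⟩) h
  exact ⟨Hs, hHs, hlt⟩

noncomputable def transfer (Gs : GraphSeq V) (Hs : GraphSeq W) {K : ℕ} (f : ∀ n, V n → W n)
    (g : ∀ n, W n → V n) (hfg : ∀ n, (Gs.G n).IsQuasiIsometryWith (Hs.G n) K (f n) (g n)) :
    GraphSeq W where
  G n := have := (Hs.connected n).nonempty; (Gs.G n).transfer (g n)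
  finite := Hs.finite
  connected n := have := (Hs.connected n).nonempty; transfer_connected (Gs.connected n)
  degBound := (Hs.degBound + 1) ^ (4 * (K + 1) ^ 3)
  deg_le n :=
    have := (Hs.connected n).nonempty
    have := Hs.finite n
    (hfg n).ncard_neighborSet_transfer_le (Gs.connected n) (Hs.connected n) (Hs.deg_le n)
  card_tendsto := Hs.card_tendsto

variable (Gs : GraphSeq V) (Hs : GraphSeq W) {K : ℕ} {f : ∀ n, V n → W n} {g : ∀ n, W n → V n}
  (hfg : ∀ n, (Gs.G n).IsQuasiIsometryWith (Hs.G n) K (f n) (g n))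

lemma equivSeq_transfer : Hs.equivSeq (Gs.transfer Hs f g hfg) := by
  refine ⟨4 * (K + 1) ^ 3, by positivity, fun n x y => ?_⟩
  have := (Hs.connected n).nonempty
  exact ⟨(hfg n).transfer_dist_le_mul_dist (Gs.connected n) (Hs.connected n) x y,
    (hfg n).dist_le_mul_transfer_dist (Gs.connected n) (Hs.connected n) x y⟩

lemma edgeNumber_transfer_le {M : ℕ} (hcard : ∀ n, Nat.card (V n) ≤ M * Nat.card (W n))
    {δ : ℝ} (hδ : Gs.edgeNumber < 1 + δ) :
    (Gs.transfer Hs f g hfg).edgeNumber ≤ 1 + M * δ := by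
  have hδpos : 0 < δ := by linarith [Gs.one_le_edgeNumber]
  refine liminf_le_of_frequently_le ?_ (isBoundedUnder_ge_edgeRatio _)
  refine (frequently_lt_of_liminf_lt Gs.isBoundedUnder_le_edgeRatio.isCoboundedUnder_ge hδ).mono
    fun n hn => ?_
  have := (Hs.connected n).nonempty
  have := Gs.finite n
  have := Hs.finite n
  have hcount : (((Gs.transfer Hs f g hfg).G n).edgeSet.ncard : ℝ) + Nat.card (V n)
      ≤ Nat.card (W n) + (Gs.G n).edgeSet.ncard := by
    exact_mod_cast ncard_edgeSet_transfer_add_card_le (g := g n) (Gs.connected n)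
  have hcardR : (Nat.card (V n) : ℝ) ≤ M * Nat.card (W n) := by exact_mod_cast hcard n
  have hVpos : (0 : ℝ) < Nat.card (V n) := by exact_mod_cast Gs.card_pos n
  have hWpos : (0 : ℝ) < Nat.card (W n) := by exact_mod_cast Hs.card_pos n
  rw [edgeRatio, div_lt_iff₀ hVpos] at hn
  change edgeRatio _ n ≤ _
  rw [edgeRatio, div_le_iff₀ hWpos]
  nlinarith [mul_le_mul_of_nonneg_left hcardR hδpos.le]

end GraphSeq

/-- Having cost `1` is a coarse invariant of graph sequences. -/
theorem stmt2 {V W : ℕ → Type} (Gs : GraphSeq V) (Hs : GraphSeq W)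
    (h : coarseEquiv Gs Hs) (hc : Gs.cost = 1) : Hs.cost = 1 := by
  obtain ⟨K, hK⟩ := h.exists_isQuasiIsometryWith
  choose f g hfg using hK
  set M := (Gs.degBound + 1) ^ K
  have hcard (n : ℕ) : Nat.card (V n) ≤ M * Nat.card (W n) :=
    have := Gs.finite n
    have := Hs.finite n
    (hfg n).card_le (Gs.connected n) (Gs.deg_le n)
  have hM : (0 : ℝ) < M := by positivity
  refine le_antisymm (le_of_forall_pos_le_add fun ε hε => ?_) Hs.one_le_cost
  obtain ⟨Gs', ⟨L, hL, hGs'⟩, hlt⟩ :=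
    GraphSeq.exists_equivSeq_edgeNumber_lt (b := 1 + ε / M) (by rw [hc]; simp [hε, hM])
  have hfg' (n : ℕ) : (Gs'.G n).IsQuasiIsometryWith (Hs.G n) (L * K) (f n) (g n) :=
    (hfg n).of_dist_le_mul hL (fun x y => (hGs' n x y).1) (fun x y => (hGs' n x y).2)
  calc Hs.cost ≤ (Gs'.transfer Hs f g hfg').edgeNumber :=
        GraphSeq.cost_le_edgeNumber (GraphSeq.equivSeq_transfer Gs' Hs hfg')
    _ ≤ 1 + M * (ε / M) := GraphSeq.edgeNumber_transfer_le Gs' Hs hfg' hcard hlt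
    _ = 1 + ε := by field_simp
end

section
/- If 𝒢 and 𝒢′ are graph sequences with 𝒢 ≃ 𝒢′ (bi-Lipschitz equivalent on the same vertex sets) and 𝒢 is hyperfinite, then 𝒢′ is hyperfinite. -/
open Filter Topology

/-!
Let `E_n` witness the hyperfiniteness of `𝒢` and delete from `G'_n` every edge whose endpoints
lie in different components of `G_n - E_n`. The components of what remains lie inside components
of `G_n - E_n`, so they have at most `K` vertices. A deleted edge `xy` of `G'_n` satisfies
`d_{G_n}(x, y) ≤ L`, and a geodesic of `G_n` from `x` to `y` must use an edge of `E_n`; hence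
`x` lies in the `L`-ball of an endpoint of `E_n`. With degrees bounded by `d` and `d'` this gives
at most `2 (d + 1)^L d' |E_n|` deleted edges.
-/

open SimpleGraph

lemma Set.ncard_biUnion_le_mul {α β : Type*} {s : Set α} (hs : s.Finite) (f : α → Set β)
    {m : ℕ} (hf : ∀ a ∈ s, (f a).ncard ≤ m) : (⋃ a ∈ s, f a).ncard ≤ s.ncard * m := by
  induction s, hs using Set.Finite.induction_on with
  | empty => simp
  | @insert a s ha hs ih =>
    rw [Set.biUnion_insert, Set.ncard_insert_of_notMem ha hs, add_mul, one_mul, add_comm]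
    exact (Set.ncard_union_le _ _).trans <| add_le_add (hf a (Set.mem_insert _ _))
      (ih fun b hb => hf b (Set.mem_insert_of_mem _ hb))

lemma Sym2.ncard_biUnion_le {α β : Type*} (e : Sym2 α) (f : α → Set β) {m : ℕ}
    (hf : ∀ a ∈ e, (f a).ncard ≤ m) : (⋃ a ∈ e, f a).ncard ≤ 2 * m := by
  induction e using Sym2.ind with
  | _ a b =>
    have hunion : (⋃ u ∈ s(a, b), f u) = f a ∪ f b := by
      ext; simp [Sym2.mem_iff]
    rw [hunion, two_mul]
    exact (Set.ncard_union_le _ _).trans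
      (add_le_add (hf a (Sym2.mem_mk_left a b)) (hf b (Sym2.mem_mk_right a b)))

lemma Filter.limsup_le_mul_of_le_mul {ι : Type*} {l : Filter ι} [l.NeBot] {a b : ι → ℝ}
    {C δ : ℝ} (hC : 0 ≤ C) (ha : ∀ i, 0 ≤ a i) (hb : IsBoundedUnder (· ≤ ·) l b)
    (hab : ∀ i, a i ≤ C * b i) (hδ : limsup b l < δ) : limsup a l ≤ C * δ := by
  refine limsup_le_of_le (isBoundedUnder_of ⟨0, ha⟩).isCoboundedUnder_le ?_
  filter_upwards [eventually_lt_of_limsup_lt hδ hb] with i hi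
  exact (hab i).trans (by gcongr)

namespace SimpleGraph

variable {V : Type*} {G G' : SimpleGraph V} {d d' L : ℕ}

def crossingEdges (G H : SimpleGraph V) : Set (Sym2 V) :=
  {e | e ∈ G.edgeSet ∧ ∃ x y, e = s(x, y) ∧ ¬H.Reachable x y}

lemma Reachable.of_deleteEdges_crossingEdges {H : SimpleGraph V} {x y : V}
    (h : (G.deleteEdges (G.crossingEdges H)).Reachable x y) : H.Reachable x y := by
  rw [reachable_iff_reflTransGen] at h
  induction h with
  | refl => rfl
  | tail _ hadj ih =>
    rw [deleteEdges_adj] at hadj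
    exact ih.trans (not_not.mp fun hnot => hadj.2 ⟨hadj.1, _, _, rfl, hnot⟩)

lemma ncard_incidenceSet (G : SimpleGraph V) (x : V) :
    (G.incidenceSet x).ncard = (G.neighborSet x).ncard := by
  classical
  rw [← Nat.card_coe_set_eq, ← Nat.card_coe_set_eq]
  exact Nat.card_congr (G.incidenceSetEquivNeighborSet x)

lemma crossingEdges_deleteEdges_subset
    (hL : ∀ x y, G'.Adj x y → ∃ p : G.Walk x y, p.length ≤ L) (E : Set (Sym2 V)) :
    G'.crossingEdges (G.deleteEdges E) ⊆
      ⋃ x ∈ ⋃ e ∈ E, ⋃ u ∈ e, G.ball u (L + 1), G'.incidenceSet x := by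
  classical
  rintro _ ⟨hxy, x, y, rfl, hnr⟩
  obtain ⟨p, hp⟩ := hL x y hxy
  obtain ⟨u, v, huv, huvE⟩ : ∃ u v, s(u, v) ∈ p.edges ∧ s(u, v) ∈ E := by
    refine (Sym2.exists (f := fun e => e ∈ p.edges ∧ e ∈ E)).mp ?_
    by_contra! h
    exact hnr (p.toDeleteEdges E h).reachable
  have hu := p.fst_mem_support_of_mem_edges huv
  have hxu : G.edist x u < L + 1 := (edist_le (p.takeUntil u hu)).trans_lt <| by
    exact_mod_cast Nat.lt_succ_of_le ((p.length_takeUntil_le_length hu).trans hp)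
  exact Set.mem_biUnion (Set.mem_biUnion huvE (Set.mem_biUnion (Sym2.mem_mk_left u v) hxu))
    ⟨hxy, Sym2.mem_mk_left x y⟩

lemma ball_succ_subset (c : V) (r : ℕ) :
    G.ball c (r + 1 + 1) ⊆ insert c (⋃ w ∈ G.neighborSet c, G.ball w (r + 1)) := by
  intro v hv
  rw [mem_ball, edist_comm] at hv
  obtain ⟨p, hp⟩ := exists_walk_of_edist_ne_top hv.ne_top
  cases p with
  | nil => exact Set.mem_insert _ _
  | @cons _ w _ hadj q =>
    refine Set.mem_insert_of_mem _ (Set.mem_biUnion hadj ?_)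
    rw [← hp, Walk.length_cons] at hv
    have hq : q.length + 1 < r + 1 + 1 := by exact_mod_cast hv
    rw [mem_ball, edist_comm]
    exact (edist_le q).trans_lt (by exact_mod_cast Nat.lt_of_succ_lt_succ hq)

variable [Finite V]

lemma ncard_biUnion_incidenceSet_le (hd : ∀ x, (G.neighborSet x).ncard ≤ d) (A : Set V) :
    (⋃ x ∈ A, G.incidenceSet x).ncard ≤ A.ncard * d :=
  Set.ncard_biUnion_le_mul A.toFinite _ fun x _ => (ncard_incidenceSet G x).trans_le (hd x)

lemma ncard_edgeSet_le (hd : ∀ x, (G.neighborSet x).ncard ≤ d) :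
    G.edgeSet.ncard ≤ Nat.card V * d := by
  have hsub : G.edgeSet ⊆ ⋃ x ∈ Set.univ, G.incidenceSet x := by
    intro e he
    induction e using Sym2.ind with
    | _ x y => exact Set.mem_biUnion (Set.mem_univ x) ⟨he, Sym2.mem_mk_left x y⟩
  calc G.edgeSet.ncard ≤ (⋃ x ∈ Set.univ, G.incidenceSet x).ncard :=
        Set.ncard_le_ncard hsub (Set.toFinite _)
    _ ≤ Nat.card V * d := by simpa using ncard_biUnion_incidenceSet_le hd Set.univ

lemma ncard_ball_le (hd : ∀ x, (G.neighborSet x).ncard ≤ d) (r : ℕ) (c : V) :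
    (G.ball c (r + 1)).ncard ≤ (d + 1) ^ r := by
  induction r generalizing c with
  | zero => simp
  | succ r ih =>
    calc (G.ball c (r + 1 + 1)).ncard
        ≤ (⋃ w ∈ G.neighborSet c, G.ball w (r + 1)).ncard + 1 :=
          (Set.ncard_le_ncard (ball_succ_subset c r) (Set.toFinite _)).trans
            (Set.ncard_insert_le _ _)
      _ ≤ (G.neighborSet c).ncard * (d + 1) ^ r + 1 := by
          gcongr
          exact Set.ncard_biUnion_le_mul (Set.toFinite _) _ fun w _ => ih w
      _ ≤ d * (d + 1) ^ r + (d + 1) ^ r := by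
          gcongr
          · exact hd c
          · exact Nat.one_le_pow _ _ d.succ_pos
      _ = (d + 1) ^ (r + 1) := by ring

lemma ncard_crossingEdges_deleteEdges_le (hd : ∀ x, (G.neighborSet x).ncard ≤ d)
    (hd' : ∀ x, (G'.neighborSet x).ncard ≤ d')
    (hL : ∀ x y, G'.Adj x y → ∃ p : G.Walk x y, p.length ≤ L) (E : Set (Sym2 V)) :
    (G'.crossingEdges (G.deleteEdges E)).ncard ≤ 2 * (d + 1) ^ L * d' * E.ncard := by
  have hballs :
      (⋃ e ∈ E, ⋃ u ∈ e, G.ball u (L + 1)).ncard ≤ E.ncard * (2 * (d + 1) ^ L) :=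
    Set.ncard_biUnion_le_mul E.toFinite _ fun e _ =>
      Sym2.ncard_biUnion_le e _ fun u _ => ncard_ball_le hd L u
  calc (G'.crossingEdges (G.deleteEdges E)).ncard
      ≤ (⋃ x ∈ ⋃ e ∈ E, ⋃ u ∈ e, G.ball u (L + 1), G'.incidenceSet x).ncard :=
        Set.ncard_le_ncard (crossingEdges_deleteEdges_subset hL E) (Set.toFinite _)
    _ ≤ (⋃ e ∈ E, ⋃ u ∈ e, G.ball u (L + 1)).ncard * d' :=
        ncard_biUnion_incidenceSet_le hd' _
    _ ≤ E.ncard * (2 * (d + 1) ^ L) * d' := Nat.mul_le_mul_right d' hballs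
    _ = 2 * (d + 1) ^ L * d' * E.ncard := by ring

end SimpleGraph

/-- Hyperfiniteness is preserved by bi-Lipschitz equivalence of graph sequences. -/
theorem stmt3 {V : ℕ → Type} (Gs Gs' : GraphSeq V)
    (h : Gs.equivSeq Gs') (hh : Gs.hyperfinite) : Gs'.hyperfinite := by
  obtain ⟨L, -, hbil⟩ := h
  intro ε hε
  set C : ℕ := 2 * (Gs.degBound + 1) ^ L * Gs'.degBound
  obtain ⟨K, hK, E, hEG, hElim, hEcomp⟩ := hh (ε / (C + 1)) (by positivity)
  set E' := fun n => (Gs'.G n).crossingEdges ((Gs.G n).deleteEdges (E n))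
  have hwalk n x y (hxy : (Gs'.G n).Adj x y) : ∃ p : (Gs.G n).Walk x y, p.length ≤ L := by
    obtain ⟨p, hp⟩ := (Gs.connected n).exists_walk_length_eq_dist x y
    exact ⟨p, by simpa [hp, dist_eq_one_iff_adj.mpr hxy] using (hbil n x y).2⟩
  have hcount n : (E' n).ncard ≤ C * (E n).ncard :=
    have := Gs.finite n
    ncard_crossingEdges_deleteEdges_le (Gs.deg_le n) (Gs'.deg_le n) (hwalk n) (E n)
  have hbdd n : ((E n).ncard : ℝ) / Nat.card (V n) ≤ Gs.degBound := by
    have := Gs.finite n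
    refine div_le_of_le_mul₀ (by positivity) (by positivity) ?_
    rw [mul_comm]
    exact_mod_cast (Set.ncard_le_ncard (hEG n)).trans (ncard_edgeSet_le (Gs.deg_le n))
  refine ⟨K, hK, E', fun n _ he => he.1, ?_, fun n x => ?_⟩
  · calc _ ≤ (C : ℝ) * (ε / (C + 1)) :=
          limsup_le_mul_of_le_mul (by positivity) (fun n => by positivity)
            (isBoundedUnder_of ⟨_, hbdd⟩)
            (fun n => by rw [mul_div_assoc']; gcongr; exact_mod_cast hcount n) hElim
      _ < ε := by rw [mul_div_assoc', div_lt_iff₀ (by positivity)]; linarith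
  · have := Gs.finite n
    exact (Set.ncard_le_ncard (fun _ => Reachable.of_deleteEdges_crossingEdges)
      (Set.toFinite _)).trans (hEcomp n x)
end
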